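/- Let d ≥ 2 be fixed, for each n let X_n be n points chosen independently and uniformly at random from [0,1]^d, and let r_n = f_n (log n / n)^{1/d} where f_n → ∞ as n → ∞. Let q, q' ∈ [0,1]^d with q ⪯ q' and min_i(q'_i − q_i) = δ for a fixed constant δ > 0 independent of n. Then the probability of the following event tends to 1 as n → ∞: there exist X, X' ∈ X_n such that (i) ‖X − q‖₂ ≤ r_n/2 and ‖X' − q'‖₂ ≤ r_n/2; (ii) q ⪯ X and X' ⪯ q'; and (iii) there is a finite sequence X = Y_1 ⪯ Y_2 ⪯ … ⪯ Y_m = X' of points of X_n, all contained in the box H(q,q'), with ‖Y_{j+1} − Y_j‖₂ ≤ r_n for every j. -/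

import Mathlib

/-!
Cut `H(q,q')` along its diagonal into `M = ⌈4√d / r_n⌉` congruent boxes placed corner to corner;
each has sides at most `r_n / (4√d)`, hence diameter at most `r_n / 4`. If every box contains a
sample point, one point per box is a monotone chain with steps at most `r_n / 2` whose first and
last points lie within `r_n / 4` of `q` and `q'`. A box of volume `v` is missed by all `n` points
with probability `(1 - v)^n ≤ exp (-n v)`. Since `v ≥ (δ / M)^d` and `r_n^d = f_n^d log n / n` with
`f_n → ∞`, eventually `n v ≥ 2 log n` and `M ≤ n`, so the union bound `M exp (-n v) ≤ 1 / n` tends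
to `0`.
-/

open MeasureTheory ProbabilityTheory Filter

noncomputable section

/-- `d`-dimensional Euclidean space. -/
abbrev E (d : ℕ) := EuclideanSpace ℝ (Fin d)

/-- The coordinatewise partial order `p ⪯ p'` on `ℝ^d`. -/
def CoordLE {d : ℕ} (p p' : E d) : Prop := ∀ i, p i ≤ p' i

/-- The unit cube `[0,1]^d`. -/
def cube (d : ℕ) : Set (E d) := {x | ∀ i, x i ∈ Set.Icc (0 : ℝ) 1}

/-- The axis-parallel box `H(a,b) = [a_1,b_1] × … × [a_d,b_d]`. -/
def box {d : ℕ} (a b : E d) : Set (E d) := {y | ∀ i, a i ≤ y i ∧ y i ≤ b i}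

namespace DiagonalBoxes

variable {d : ℕ}

lemma box_eq_preimage_pi (a b : E d) :
    box a b = (MeasurableEquiv.toLp 2 (Fin d → ℝ)).symm ⁻¹'
      Set.univ.pi fun i => Set.Icc (a i) (b i) := by
  ext y
  simp only [box, Set.mem_preimage, Set.mem_pi, Set.mem_univ, forall_true_left, Set.mem_Icc,
    Set.mem_ofPred_eq]
  rfl

lemma measurableSet_box (a b : E d) : MeasurableSet (box a b) := by
  rw [box_eq_preimage_pi]
  exact (MeasurableEquiv.toLp 2 (Fin d → ℝ)).symm.measurable
    (MeasurableSet.univ_pi fun _ => measurableSet_Icc)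

lemma volume_box (a b : E d) : volume (box a b) = ∏ i, ENNReal.ofReal (b i - a i) := by
  rw [box_eq_preimage_pi, (EuclideanSpace.volume_preserving_symm_measurableEquiv_toLp
    (Fin d)).measure_preimage (MeasurableSet.univ_pi fun _ => measurableSet_Icc).nullMeasurableSet,
    volume_pi_pi]
  simp only [Real.volume_Icc]

lemma dist_le_sqrt_mul_of_abs_sub_le {x y : E d} {c : ℝ} (hc : 0 ≤ c)
    (h : ∀ i, |x i - y i| ≤ c) : dist x y ≤ √d * c := by
  have hsum : ∑ i, dist (x i) (y i) ^ 2 ≤ d * c ^ 2 := by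
    calc ∑ i, dist (x i) (y i) ^ 2 ≤ ∑ _i : Fin d, c ^ 2 :=
          Finset.sum_le_sum fun i _ => pow_le_pow_left₀ dist_nonneg (h i) 2
      _ = d * c ^ 2 := by simp
  calc dist x y = √(∑ i, dist (x i) (y i) ^ 2) := EuclideanSpace.dist_eq x y
    _ ≤ √(d * c ^ 2) := Real.sqrt_le_sqrt hsum
    _ = √d * c := by rw [Real.sqrt_mul (Nat.cast_nonneg d), Real.sqrt_sq hc]

/-- The `j`-th of `M` congruent boxes strung along the diagonal of `H(q,q')`, corner to corner. -/
def diagBox (q q' : E d) (M j : ℕ) : Set (E d) :=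
  box (AffineMap.lineMap q q' ((j : ℝ) / M)) (AffineMap.lineMap q q' (((j : ℝ) + 1) / M))

lemma mem_diagBox {q q' y : E d} {M j : ℕ} :
    y ∈ diagBox q q' M j ↔ ∀ k, q k + j * ((q' k - q k) / M) ≤ y k ∧
      y k ≤ q k + (j + 1) * ((q' k - q k) / M) := by
  simp only [diagBox, box, Set.mem_ofPred_eq, AffineMap.lineMap_apply, vsub_eq_sub, vadd_eq_add,
    PiLp.add_apply, PiLp.smul_apply, PiLp.sub_apply, smul_eq_mul]
  grind

lemma measurableSet_diagBox (q q' : E d) (M j : ℕ) : MeasurableSet (diagBox q q' M j) :=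
  measurableSet_box _ _

lemma diagBox_subset_box {q q' : E d} (hle : CoordLE q q') {M j : ℕ} (hj : j < M) :
    diagBox q q' M j ⊆ box q q' := by
  intro y hy k
  obtain ⟨hlo, hhi⟩ := mem_diagBox.1 hy k
  have hM : (0 : ℝ) < M := by exact_mod_cast (Nat.zero_le j).trans_lt hj
  have hj1 : (j : ℝ) + 1 ≤ M := by exact_mod_cast hj
  have ht : 0 ≤ (q' k - q k) / M := div_nonneg (sub_nonneg.2 (hle k)) hM.le
  have hMt : M * ((q' k - q k) / M) = q' k - q k := mul_div_cancel₀ _ hM.ne'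
  constructor <;> nlinarith [Nat.cast_nonneg (α := ℝ) j]

lemma volume_diagBox {q q' : E d} (hle : CoordLE q q') (M j : ℕ) :
    volume (diagBox q q' M j) = ENNReal.ofReal (∏ k, (q' k - q k) / M) := by
  rw [diagBox, volume_box, ENNReal.ofReal_prod_of_nonneg
    fun k _ => div_nonneg (sub_nonneg.2 (hle k)) (Nat.cast_nonneg M)]
  congr 1 with k
  simp only [AffineMap.lineMap_apply, vsub_eq_sub, vadd_eq_add, PiLp.add_apply, PiLp.smul_apply,
    PiLp.sub_apply, smul_eq_mul]
  ring_nf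

def MonotoneConnected (S : Set (E d)) (q q' : E d) (r : ℝ) : Prop :=
  ∃ x x' : E d, x ∈ S ∧ x' ∈ S ∧ dist x q ≤ r / 2 ∧ dist x' q' ≤ r / 2 ∧
    CoordLE q x ∧ CoordLE x' q' ∧
    ∃ (m : ℕ) (Y : ℕ → E d), Y 0 = x ∧ Y m = x' ∧
      (∀ j ≤ m, Y j ∈ S ∧ Y j ∈ box q q') ∧
      (∀ j < m, CoordLE (Y j) (Y (j + 1))) ∧
      (∀ j < m, dist (Y j) (Y (j + 1)) ≤ r)

/-- Consecutive diagonal boxes touch at a corner, so a point of `S` in each box forms the chain. -/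
theorem monotoneConnected_of_forall_diagBox {S : Set (E d)} {q q' : E d} {r s : ℝ} {M : ℕ}
    (hle : CoordLE q q') (hM : 0 < M) (hs0 : 0 ≤ s) (hs : ∀ k, (q' k - q k) / M ≤ s)
    (hsr : √d * s ≤ r / 4) (hS : ∀ j < M, ∃ y ∈ S, y ∈ diagBox q q' M j) :
    MonotoneConnected S q q' r := by
  choose! Y hYS hYB using hS
  have hsd : 0 ≤ √d * s := mul_nonneg (Real.sqrt_nonneg _) hs0
  have hMR : (0 : ℝ) < M := by exact_mod_cast hM
  have ht k : 0 ≤ (q' k - q k) / M := div_nonneg (sub_nonneg.2 (hle k)) hMR.le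
  have hfirst k : q k ≤ Y 0 k ∧ Y 0 k ≤ q k + (q' k - q k) / M := by
    simpa using mem_diagBox.1 (hYB 0 hM) k
  have hlast k : q' k - (q' k - q k) / M ≤ Y (M - 1) k ∧ Y (M - 1) k ≤ q' k := by
    have h := mem_diagBox.1 (hYB (M - 1) (Nat.sub_lt hM one_pos)) k
    have hMt : M * ((q' k - q k) / M) = q' k - q k := mul_div_cancel₀ _ hMR.ne'
    rw [Nat.cast_pred hM, sub_add_cancel, sub_mul, one_mul, hMt] at h
    constructor <;> linarith [h.1, h.2]
  refine ⟨Y 0, Y (M - 1), hYS 0 hM, hYS _ (Nat.sub_lt hM one_pos), ?_, ?_, fun k => ?_,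
    fun k => ?_, M - 1, Y, rfl, rfl, fun j hj => ?_, fun j hj k => ?_, fun j hj => ?_⟩
  · refine (dist_le_sqrt_mul_of_abs_sub_le hs0 fun k => ?_).trans (by linarith)
    rw [abs_le]
    constructor <;> linarith [hs k, ht k, hfirst k]
  · refine (dist_le_sqrt_mul_of_abs_sub_le hs0 fun k => ?_).trans (by linarith)
    rw [abs_le]
    constructor <;> linarith [hs k, ht k, hlast k]
  · exact (hfirst k).1
  · exact (hlast k).2
  · exact ⟨hYS j (by omega), diagBox_subset_box hle (by omega) (hYB j (by omega))⟩
  · have h1 := (mem_diagBox.1 (hYB j (by omega)) k).2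
    have h2 := (mem_diagBox.1 (hYB (j + 1) (by omega)) k).1
    push_cast at h2
    linarith
  · refine (dist_le_sqrt_mul_of_abs_sub_le (by linarith : 0 ≤ 2 * s) fun k => ?_).trans
      (by linarith)
    have h1 := mem_diagBox.1 (hYB j (by omega)) k
    have h2 := mem_diagBox.1 (hYB (j + 1) (by omega)) k
    push_cast at h2
    rw [abs_le]
    constructor <;> linarith [hs k, ht k, h1.1, h1.2, h2.1, h2.2]

lemma monotoneConnected_of_forall_diagBox_natCeil (hd : d ≠ 0) {S : Set (E d)} {q q' : E d}
    {r : ℝ} (hr : 0 < r) (hq : q ∈ cube d) (hq' : q' ∈ cube d) (hle : CoordLE q q')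
    (hS : ∀ j < ⌈4 * √d / r⌉₊, ∃ y ∈ S, y ∈ diagBox q q' ⌈4 * √d / r⌉₊ j) :
    MonotoneConnected S q q' r := by
  have hsd : 0 < √d := Real.sqrt_pos.2 (by exact_mod_cast Nat.pos_of_ne_zero hd)
  have hs : 0 < r / (4 * √d) := by positivity
  have hM : 0 < ⌈4 * √d / r⌉₊ := Nat.ceil_pos.2 (by positivity)
  refine monotoneConnected_of_forall_diagBox hle hM hs.le (fun k => ?_)
    (le_of_eq (by field_simp)) hS
  rw [div_le_iff₀ (Nat.cast_pos.2 hM)]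
  calc q' k - q k ≤ 1 := by linarith [(hq k).1, (hq' k).2]
    _ = r / (4 * √d) * (4 * √d / r) := by field_simp
    _ ≤ r / (4 * √d) * ⌈4 * √d / r⌉₊ := mul_le_mul_of_nonneg_left (Nat.le_ceil _) hs.le

section Sampling

variable {Ω : Type*} [MeasurableSpace Ω] {P : Measure Ω} [IsProbabilityMeasure P]
  {X : ℕ → Ω → E d}

lemma measure_forall_lt_notMem (hXmeas : ∀ i, Measurable (X i)) (hindep : iIndepFun X P)
    (hunif : ∀ i, P.map (X i) = volume.restrict (cube d)) {B : Set (E d)} (hB : MeasurableSet B)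
    (hBc : B ⊆ cube d) (n : ℕ) :
    P {ω | ∀ i < n, X i ω ∉ B} = (1 - volume B) ^ n := by
  have hset : {ω | ∀ i < n, X i ω ∉ B} = ⋂ i ∈ Finset.range n, X i ⁻¹' Bᶜ := by
    ext ω
    simp
  have hmiss i : P (X i ⁻¹' Bᶜ) = 1 - volume B := by
    rw [Set.preimage_compl, prob_compl_eq_one_sub (hXmeas i hB), ← Measure.map_apply (hXmeas i) hB,
      hunif i, Measure.restrict_apply hB, Set.inter_eq_self_of_subset_left hBc]
  rw [hset, hindep.meas_biInter fun i _ => ⟨Bᶜ, hB.compl, rfl⟩]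
  simp only [hmiss, Finset.prod_const, Finset.card_range]

lemma measure_exists_diagBox_empty_le (hXmeas : ∀ i, Measurable (X i)) (hindep : iIndepFun X P)
    (hunif : ∀ i, P.map (X i) = volume.restrict (cube d)) {q q' : E d} (hq : q ∈ cube d)
    (hq' : q' ∈ cube d) (hle : CoordLE q q') (M n : ℕ) :
    P {ω | ∃ j < M, ∀ i < n, X i ω ∉ diagBox q q' M j} ≤
      ENNReal.ofReal (M * Real.exp (-(n * ∏ k, (q' k - q k) / M))) := by
  set v := ∏ k, (q' k - q k) / M
  have hv : 0 ≤ v := Finset.prod_nonneg fun k _ => div_nonneg (sub_nonneg.2 (hle k)) M.cast_nonneg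
  have hbox : box q q' ⊆ cube d := fun y hy k =>
    ⟨(hq k).1.trans (hy k).1, (hy k).2.trans (hq' k).2⟩
  have hempty j (hj : j ∈ Finset.range M) :
      P {ω | ∀ i < n, X i ω ∉ diagBox q q' M j} ≤ ENNReal.ofReal (Real.exp (-(n * v))) := by
    rw [measure_forall_lt_notMem hXmeas hindep hunif (measurableSet_diagBox q q' M j)
      ((diagBox_subset_box hle (Finset.mem_range.1 hj)).trans hbox), volume_diagBox hle]
    calc (1 - ENNReal.ofReal v) ^ n ≤ ENNReal.ofReal (Real.exp (-v)) ^ n := by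
          gcongr
          rw [← ENNReal.ofReal_one, ← ENNReal.ofReal_sub _ hv]
          exact ENNReal.ofReal_le_ofReal (by linarith [Real.add_one_le_exp (-v)])
      _ = ENNReal.ofReal (Real.exp (-(n * v))) := by
          rw [← ENNReal.ofReal_pow (Real.exp_nonneg _), ← Real.exp_nat_mul, mul_neg]
  calc P {ω | ∃ j < M, ∀ i < n, X i ω ∉ diagBox q q' M j}
      = P (⋃ j ∈ Finset.range M, {ω | ∀ i < n, X i ω ∉ diagBox q q' M j}) := by
        congr 1
        ext ω
        simp
    _ ≤ ∑ j ∈ Finset.range M, P {ω | ∀ i < n, X i ω ∉ diagBox q q' M j} :=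
        measure_biUnion_finset_le _ _
    _ ≤ ∑ _j ∈ Finset.range M, ENNReal.ofReal (Real.exp (-(n * v))) := Finset.sum_le_sum hempty
    _ = ENNReal.ofReal (M * Real.exp (-(n * v))) := by
        rw [Finset.sum_const, Finset.card_range, nsmul_eq_mul, ENNReal.ofReal_mul M.cast_nonneg,
          ENNReal.ofReal_natCast]

end Sampling

lemma natCeil_le_max_one_two_mul {x : ℝ} (hx : 0 ≤ x) : (⌈x⌉₊ : ℝ) ≤ max 1 (2 * x) := by
  rcases le_or_gt x 1 with hx1 | hx1
  · exact le_max_of_le_left (by exact_mod_cast Nat.ceil_le.2 (by simpa using hx1))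
  · exact le_max_of_le_right (by linarith [Nat.ceil_lt_add_one hx])

lemma mul_exp_neg_le_inv {n M γ : ℝ} (hn : 0 < n) (hM : 0 < M) (hMn : M ≤ n)
    (hMd : 2 * Real.log n * M ^ d ≤ n * γ) : M * Real.exp (-(n * (γ / M ^ d))) ≤ 1 / n := by
  have hexp : Real.exp (-(n * (γ / M ^ d))) ≤ Real.exp (-(2 * Real.log n)) := by
    rw [Real.exp_le_exp, neg_le_neg_iff, ← mul_div_assoc, le_div_iff₀ (by positivity)]
    exact hMd
  have hn2 : Real.exp (-(2 * Real.log n)) = 1 / n ^ 2 := by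
    rw [Real.exp_neg, mul_comm, Real.exp_mul, Real.exp_log hn, one_div, Real.rpow_two]
  calc M * Real.exp (-(n * (γ / M ^ d))) ≤ n * (1 / n ^ 2) :=
        mul_le_mul hMn (hexp.trans_eq hn2) (Real.exp_nonneg _) hn.le
    _ = 1 / n := by field_simp

/-- For `r^d = F^d log n / n` with `F` large, there are `M = ⌈a / r⌉ ≤ n` diagonal boxes, each of
volume `γ / M^d ≥ 2 log n / n`. -/
lemma natCeil_div_le_and_log_mul_pow_le {n : ℕ} (hd : d ≠ 0) (hn : 3 ≤ n) {a γ F r : ℝ}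
    (ha : 0 < a) (hF : 0 < F) (hr : 0 < r) (hrd : r ^ d * n = F ^ d * Real.log n)
    (hFa : (2 * a) ^ d ≤ F ^ d) (hFγ : 2 * (2 * a) ^ d ≤ F ^ d * γ)
    (hnγ : 2 * Real.log n ≤ n * γ) :
    (⌈a / r⌉₊ : ℝ) ≤ n ∧ 2 * Real.log n * ⌈a / r⌉₊ ^ d ≤ n * γ := by
  set M := ⌈a / r⌉₊
  set L := Real.log n
  have hnR : (3 : ℝ) ≤ n := by exact_mod_cast hn
  have hL : 1 ≤ L := by
    rw [Real.le_log_iff_exp_le (by positivity)]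
    linarith [Real.exp_one_lt_d9]
  have hM : (1 : ℝ) ≤ M := by exact_mod_cast Nat.one_le_iff_ne_zero.2 (by positivity)
  rcases le_max_iff.1 (natCeil_le_max_one_two_mul (div_pos ha hr).le) with hM1 | hM2
  · have hMd : (M : ℝ) ^ d = 1 :=
      (pow_eq_one_iff_of_nonneg (by positivity) hd).2 (hM1.antisymm hM)
    rw [hMd]
    constructor <;> linarith
  · have hMr : (M * r) ^ d ≤ (2 * a) ^ d := by
      refine pow_le_pow_left₀ (by positivity) ((le_div_iff₀ hr).1 ?_) d
      rwa [mul_div_assoc]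
    have hkey : F ^ d * (M ^ d * L) ≤ (2 * a) ^ d * n := by
      calc F ^ d * (M ^ d * L) = (M * r) ^ d * n := by rw [mul_pow, mul_assoc, hrd]; ring
        _ ≤ (2 * a) ^ d * n := mul_le_mul_of_nonneg_right hMr (by positivity)
    have hFd : 0 < F ^ d := by positivity
    constructor
    · have hML : (M : ℝ) ^ d * L ≤ n :=
        le_of_mul_le_mul_left (hkey.trans (mul_le_mul_of_nonneg_right hFa (by positivity))) hFd
      calc (M : ℝ) ≤ M ^ d := le_self_pow₀ hM hd
        _ ≤ M ^ d * L := le_mul_of_one_le_right (by positivity) hL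
        _ ≤ n := hML
    · refine le_of_mul_le_mul_left ?_ hFd
      nlinarith

lemma eventually_radius_pos {f r : ℕ → ℝ} (hf : Tendsto f atTop atTop)
    (hr : ∀ n : ℕ, r n = f n * ((Real.log n / n) ^ ((1 : ℝ) / (d : ℝ)))) :
    ∀ᶠ n in atTop, 0 < r n := by
  filter_upwards [eventually_gt_atTop 1, hf.eventually_gt_atTop 0] with n hn hfn
  have hn' : (1 : ℝ) < n := by exact_mod_cast hn
  rw [hr]
  exact mul_pos hfn (Real.rpow_pos_of_pos (div_pos (Real.log_pos hn') (by linarith)) _)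

theorem tendsto_natCeil_mul_exp_neg (hd : d ≠ 0) {a γ : ℝ} (ha : 0 < a) (hγ : 0 < γ)
    {f r : ℕ → ℝ} (hf : Tendsto f atTop atTop)
    (hr : ∀ n : ℕ, r n = f n * ((Real.log n / n) ^ ((1 : ℝ) / (d : ℝ)))) :
    Tendsto (fun n : ℕ => (⌈a / r n⌉₊ : ℝ) * Real.exp (-(n * (γ / ⌈a / r n⌉₊ ^ d))))
      atTop (nhds 0) := by
  have hlog : ∀ᶠ n : ℕ in atTop, 2 * Real.log n ≤ n * γ := by
    filter_upwards [tendsto_natCast_atTop_atTop.eventually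
      (Real.isLittleO_log_id_atTop.bound (half_pos hγ))] with n hn
    rw [id, Real.norm_natCast, Real.norm_eq_abs] at hn
    linarith [le_abs_self (Real.log n)]
  have hfd := (tendsto_pow_atTop hd).comp hf
  refine squeeze_zero' (Eventually.of_forall fun n => by positivity) ?_
    tendsto_one_div_atTop_nhds_zero_nat
  filter_upwards [eventually_ge_atTop 3, hf.eventually_gt_atTop 0, eventually_radius_pos hf hr,
    hlog, hfd.eventually_ge_atTop ((2 * a) ^ d), hfd.eventually_ge_atTop (2 * (2 * a) ^ d / γ)]
    with n hn hF hr0 hnγ hFa hFγ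
  rw [Function.comp_apply, div_le_iff₀ hγ] at hFγ
  have hLn : 0 < Real.log n / n :=
    div_pos (Real.log_pos (by exact_mod_cast (by omega : 1 < n))) (by positivity)
  have hrd : r n ^ d * n = f n ^ d * Real.log n := by
    rw [hr, mul_pow, one_div, Real.rpow_inv_natCast_pow hLn.le hd]
    field_simp
  obtain ⟨hMn, hMd⟩ := natCeil_div_le_and_log_mul_pow_le hd hn ha hF hr0 hrd hFa hFγ hnγ
  exact mul_exp_neg_le_inv (by positivity)
    (Nat.cast_pos.2 (Nat.ceil_pos.2 (div_pos ha hr0))) hMn hMd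

lemma pow_div_pow_le_prod_div {g : Fin d → ℝ} {δ c : ℝ} (hδ : 0 ≤ δ) (hc : 0 ≤ c)
    (hg : ∀ k, δ ≤ g k) : δ ^ d / c ^ d ≤ ∏ k, g k / c := by
  calc δ ^ d / c ^ d = ∏ _k : Fin d, δ / c := by simp
    _ ≤ ∏ k, g k / c := Finset.prod_le_prod (fun _ _ => by positivity)
        fun k _ => div_le_div_of_nonneg_right (hg k) hc

end DiagonalBoxes

open DiagonalBoxes in
theorem stmt_3_general {d : ℕ} (hd : 2 ≤ d)
    {Ω : Type*} [MeasurableSpace Ω] (P : Measure Ω) [IsProbabilityMeasure P]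
    (X : ℕ → Ω → E d) (hXmeas : ∀ i, Measurable (X i))
    (hindep : iIndepFun X P)
    (hunif : ∀ i, P.map (X i) = volume.restrict (cube d))
    (f : ℕ → ℝ) (hf : Tendsto f atTop atTop)
    (r : ℕ → ℝ) (hr : ∀ n : ℕ, r n = f n * ((Real.log n / n) ^ ((1 : ℝ) / (d : ℝ))))
    (q q' : E d) (hq : q ∈ cube d) (hq' : q' ∈ cube d)
    (δ : ℝ) (hδ : 0 < δ) (hδle : ∀ i, δ ≤ q' i - q i) :
    Tendsto
      (fun n : ℕ => P {ω | ∃ x x' : E d,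
          (∃ i < n, X i ω = x) ∧ (∃ i < n, X i ω = x') ∧
          dist x q ≤ r n / 2 ∧ dist x' q' ≤ r n / 2 ∧
          CoordLE q x ∧ CoordLE x' q' ∧
          ∃ (m : ℕ) (Y : ℕ → E d), Y 0 = x ∧ Y m = x' ∧
            (∀ j ≤ m, (∃ i < n, X i ω = Y j) ∧ Y j ∈ box q q') ∧
            (∀ j < m, CoordLE (Y j) (Y (j + 1))) ∧
            (∀ j < m, dist (Y j) (Y (j + 1)) ≤ r n)})
      atTop (nhds 1) := by
  have hd0 : d ≠ 0 := by omega
  have hle : CoordLE q q' := fun i => by linarith [hδle i]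
  set M : ℕ → ℕ := fun n => ⌈4 * √d / r n⌉₊
  set bad : ℕ → Set Ω := fun n => {ω | ∃ j < M n, ∀ i < n, X i ω ∉ diagBox q q' (M n) j}
  have hbad : Tendsto (fun n => P (bad n)) atTop (nhds 0) := by
    refine tendsto_of_tendsto_of_tendsto_of_le_of_le tendsto_const_nhds ?_ (fun _ => zero_le)
      fun n => measure_exists_diagBox_empty_le hXmeas hindep hunif hq hq' hle (M n) n
    rw [← ENNReal.ofReal_zero]
    refine ENNReal.tendsto_ofReal (squeeze_zero (fun _ => by positivity) (fun n => ?_)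
      (tendsto_natCeil_mul_exp_neg (a := 4 * √d) hd0 (by positivity) (pow_pos hδ d) hf hr))
    gcongr
    exact pow_div_pow_le_prod_div hδ.le (Nat.cast_nonneg _) hδle
  have hgood : ∀ᶠ n in atTop, ∀ ω, ω ∉ bad n →
      MonotoneConnected {y | ∃ i < n, X i ω = y} q q' (r n) := by
    filter_upwards [eventually_radius_pos hf hr] with n hrn ω hω
    refine monotoneConnected_of_forall_diagBox_natCeil hd0 hrn hq hq' hle fun j hj => ?_
    simp only [bad, Set.mem_ofPred_eq, not_exists, not_and, not_forall, not_not] at hω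
    obtain ⟨i, hi, hXi⟩ := hω j hj
    exact ⟨X i ω, ⟨i, hi, rfl⟩, hXi⟩
  have hlower : Tendsto (fun n => 1 - P (bad n)) atTop (nhds 1) := by
    simpa using ENNReal.Tendsto.sub tendsto_const_nhds hbad (Or.inl ENNReal.one_ne_top)
  refine tendsto_of_tendsto_of_tendsto_of_le_of_le' hlower tendsto_const_nhds ?_
    (Eventually.of_forall fun _ => prob_le_one)
  filter_upwards [hgood] with n hn
  rw [← measure_univ (μ := P)]
  exact le_measure_sdiff.trans (measure_mono fun ω hω => hn ω hω.2)

/-- localized monotone connectivity. Almost surely there exist sample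
points `X, X'` with `‖X - q‖ ≤ r_n/2`, `‖X' - q'‖ ≤ r_n/2`, `q ⪯ X`, `X' ⪯ q'`, which
are connected by a monotone chain of sample points inside the box `H(q,q')` whose
consecutive points are at distance at most `r_n`. -/
theorem stmt_3 {d : ℕ} (hd : 2 ≤ d)
    {Ω : Type*} [MeasurableSpace Ω] (P : Measure Ω) [IsProbabilityMeasure P]
    (X : ℕ → Ω → E d) (hXmeas : ∀ i, Measurable (X i))
    (hindep : iIndepFun X P)
    (hunif : ∀ i, P.map (X i) = volume.restrict (cube d))
    (f : ℕ → ℝ) (hf : Tendsto f atTop atTop)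
    (r : ℕ → ℝ) (hr : ∀ n : ℕ, r n = f n * ((Real.log n / n) ^ ((1 : ℝ) / (d : ℝ))))
    (q q' : E d) (hq : q ∈ cube d) (hq' : q' ∈ cube d) (hle : CoordLE q q')
    (δ : ℝ) (hδ : 0 < δ) (hδle : ∀ i, δ ≤ q' i - q i) (hδmin : ∃ i, q' i - q i = δ) :
    Tendsto
      (fun n : ℕ => P {ω | ∃ x x' : E d,
          (∃ i < n, X i ω = x) ∧ (∃ i < n, X i ω = x') ∧
          dist x q ≤ r n / 2 ∧ dist x' q' ≤ r n / 2 ∧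
          CoordLE q x ∧ CoordLE x' q' ∧
          ∃ (m : ℕ) (Y : ℕ → E d), Y 0 = x ∧ Y m = x' ∧
            (∀ j ≤ m, (∃ i < n, X i ω = Y j) ∧ Y j ∈ box q q') ∧
            (∀ j < m, CoordLE (Y j) (Y (j + 1))) ∧
            (∀ j < m, dist (Y j) (Y (j + 1)) ≤ r n)})
      atTop (nhds 1) :=
  stmt_3_general hd P X hXmeas hindep hunif f hf r hr q q' hq hq' δ hδ hδle
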